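/- Let T \ge 2 be a natural number and \alpha \in [1/2, 1]. Set C = T^\alpha / 2, \epsilon = T^{-\alpha/2}/16, and \eta = T^{\alpha - 1}/2. Then 1 - \eta - \sqrt{16\epsilon^2(\eta(T - C) + C)} \ge 1/4. -/
import Mathlib


theorem lower_bound_arithmetic (T : ℝ) (hT : 2 ≤ T) (α : ℝ) (hα : α ∈ Set.Icc (1/2 : ℝ) 1) :
    (1/4 : ℝ) ≤
      1 - T ^ (α - 1) / 2 -
        Real.sqrt (16 * (T ^ (-α/2) / 16) ^ 2 *
          ((T ^ (α - 1) / 2) * (T - T ^ α / 2) + T ^ α / 2)) := by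
  obtain ⟨hα1, hα2⟩ := hα
  have hT0 : (0 : ℝ) < T := by linarith
  have hT1 : (1 : ℝ) ≤ T := by linarith
  have hA1 : T ^ (α - 1) ≤ 1 :=
    Real.rpow_le_one_of_one_le_of_nonpos hT1 (by linarith)
  have hA0 : 0 ≤ T ^ (α - 1) := (Real.rpow_pos_of_pos hT0 _).le
  have hB0 : 0 ≤ T ^ α := (Real.rpow_pos_of_pos hT0 _).le
  have hAT : T ^ (α - 1) * T = T ^ α := by
    rw [← Real.rpow_add_one hT0.ne', sub_add_cancel]
  have hsq : (T ^ (-α/2)) ^ 2 = T ^ (-α) := by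
    rw [← Real.rpow_natCast (T ^ (-α/2)) 2, ← Real.rpow_mul hT0.le]
    norm_num
  have hinv : T ^ (-α) * T ^ α = 1 := by
    rw [← Real.rpow_add hT0]; norm_num
  have hprod : 16 * (T ^ (-α/2) / 16) ^ 2 *
      ((T ^ (α - 1) / 2) * (T - T ^ α / 2) + T ^ α / 2) ≤ 1/16 := by
    have hinner : (T ^ (α - 1) / 2) * (T - T ^ α / 2) + T ^ α / 2
        = T ^ α * (1 - T ^ (α - 1) / 4) := by
      have : T ^ (α - 1) * (T ^ α) = T ^ (α - 1) * T ^ α := rfl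
      nlinarith [hAT]
    rw [hinner]
    have h16 : 16 * (T ^ (-α/2) / 16) ^ 2 = T ^ (-α) / 16 := by
      rw [div_pow, hsq]; ring
    rw [h16]
    have hle : T ^ α * (1 - T ^ (α - 1) / 4) ≤ T ^ α := by nlinarith
    have hpos : 0 ≤ T ^ (-α) / 16 := by positivity
    calc T ^ (-α) / 16 * (T ^ α * (1 - T ^ (α - 1) / 4))
        ≤ T ^ (-α) / 16 * T ^ α := by nlinarith [Real.rpow_pos_of_pos hT0 (-α)]
      _ = 1/16 := by rw [div_mul_eq_mul_div, hinv]
  have hsqrt : Real.sqrt (16 * (T ^ (-α/2) / 16) ^ 2 *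
      ((T ^ (α - 1) / 2) * (T - T ^ α / 2) + T ^ α / 2)) ≤ 1/4 := by
    have := Real.sqrt_le_sqrt hprod
    calc _ ≤ Real.sqrt (1/16) := this
      _ = 1/4 := by
        rw [show (1/16 : ℝ) = (1/4)^2 by norm_num, Real.sqrt_sq (by norm_num)]
  linarith
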